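/- Let 𝒜 be a Hilbert evolution algebra with a natural orthonormal basis 𝓑 = {e_i}_{i∈ℕ}. If G(𝒜,𝓑) contains an oriented cycle, then 𝒜 is neither nil nor nilpotent: taking an oriented cycle {i₁, …, i_m, i₁} of minimal length, the element v = e_{i₁} + ⋯ + e_{i_m} satisfies v^n ≠ 0 for every n ∈ ℕ. -/

import Mathlib

noncomputable section

open scoped ENat

/-! ### Digraph notions associated to a matrix of structural constants

The associated digraph `G(𝒜,𝓑)` has vertex set `ℕ` and a directed edge `(i,k)` iff
`ω i k ≠ 0`. -/

/-- `DsetU ω m U` is the set `D^m(U)` of `m`-th generation descendants of `U`: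
`D^0(U) = U` and `D^{m+1}(U) = {k | ∃ i ∈ D^m(U), ω i k ≠ 0}`. -/
def DsetU (ω : ℕ → ℕ → ℂ) : ℕ → Set ℕ → Set ℕ
  | 0, U => U
  | m + 1, U => {k | ∃ i ∈ DsetU ω m U, ω i k ≠ 0}

/-- `Dm ω m i = D^m(i)`, the `m`-th generation descendants of the vertex `i`. -/
def Dm (ω : ℕ → ℕ → ℂ) (m i : ℕ) : Set ℕ := DsetU ω m {i}

/-- `Desc ω i = D(i) = ⋃_{m ≥ 1} D^m(i)`, the set of descendants of `i`. -/
def Desc (ω : ℕ → ℕ → ℂ) (i : ℕ) : Set ℕ := ⋃ m ∈ {m : ℕ | 1 ≤ m}, Dm ω m i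

/-- `gdist ω i u` is the length of a shortest directed path (walk) from `i` to `u`. -/
def gdist (ω : ℕ → ℕ → ℂ) (i u : ℕ) : ℕ := sInf {n : ℕ | u ∈ Dm ω n i}

/-- The depth `δ(G_i) = sup {dist(i,u) : u ∈ D(i)}` of the subgraph `G_i` induced on the
descendants of `i`, as an extended natural number (`⊤` when unbounded). -/
def depth (ω : ℕ → ℕ → ℂ) (i : ℕ) : ℕ∞ := ⨆ u ∈ Desc ω i, (gdist ω i u : ℕ∞)

/-- `p 0, p 1, …, p n` is an oriented cycle: a non-empty directed path in which the only
repeated vertices are the first and the last one. -/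
def IsOrientedCycle (ω : ℕ → ℕ → ℂ) (n : ℕ) (p : ℕ → ℕ) : Prop :=
  0 < n ∧ (∀ m < n, ω (p m) (p (m + 1)) ≠ 0) ∧ p n = p 0 ∧
    ∀ a b, a < b → b < n → p a ≠ p b

/-- The digraph associated to `ω` contains an oriented cycle. -/
def HasOrientedCycle (ω : ℕ → ℕ → ℂ) : Prop := ∃ n p, IsOrientedCycle ω n p

/-! ### Algebra notions -/

variable {H : Type*} [NormedAddCommGroup H] [InnerProductSpace ℂ H] [CompleteSpace H]

/-- The structural constants of a Hilbert evolution algebra with product `mul` relative to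
the natural orthonormal basis `e`: `ω i k` is the `k`-th coordinate of `e i · e i`,
so that `e i · e i = ∑'_k ω i k • e k`. -/
def structConst (mul : H →ₗ[ℂ] H →ₗ[ℂ] H) (e : HilbertBasis ℕ ℂ H) (i k : ℕ) : ℂ :=
  e.repr (mul (e i) (e i)) k

/-- Principal powers: `ppow mul v n = v^n` for `n ≥ 1` (with the junk value `v` at `n = 0`):
`v^1 = v` and `v^{n+1} = v^n · v`. -/
def ppow (mul : H →ₗ[ℂ] H →ₗ[ℂ] H) (v : H) : ℕ → H
  | 0 => v
  | 1 => v
  | n + 2 => mul (ppow mul v (n + 1)) v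

/-- The algebra is nil: every element has a vanishing principal power. -/
def IsNil (mul : H →ₗ[ℂ] H →ₗ[ℂ] H) : Prop := ∀ v : H, ∃ n : ℕ, 1 ≤ n ∧ ppow mul v n = 0

/-- The product `S·T` of two subspaces: the span of all products `x·y`, `x ∈ S`, `y ∈ T`. -/
def mulSub (mul : H →ₗ[ℂ] H →ₗ[ℂ] H) (S T : Submodule ℂ H) : Submodule ℂ H :=
  Submodule.span ℂ {z : H | ∃ x ∈ S, ∃ y ∈ T, z = mul x y}

/-- The powers `𝒜^n` (for `n ≥ 1`, with the junk value `⊤` at `n = 0`):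
`𝒜^1 = 𝒜` and `𝒜^{n+1} = ∑_{i=1}^{n} 𝒜^i 𝒜^{n+1-i}`. -/
def apow (mul : H →ₗ[ℂ] H →ₗ[ℂ] H) (n : ℕ) : Submodule ℂ H :=
  n.strongRecOn fun n ih =>
    match n, ih with
    | 0, _ => ⊤
    | 1, _ => ⊤
    | m + 2, ih =>
      ⨆ (i : ℕ) (h1 : 1 ≤ i) (h2 : i ≤ m + 1),
        mulSub mul (ih i (by omega)) (ih (m + 2 - i) (by omega))

/-- The algebra is nilpotent: `𝒜^n = 0` for some `n`. -/
def IsNilpotent' (mul : H →ₗ[ℂ] H →ₗ[ℂ] H) : Prop := ∃ n : ℕ, 1 ≤ n ∧ apow mul n = ⊥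

/-- The right powers `𝒜^{<n>}` (for `n ≥ 1`, with the junk value `⊤` at `n = 0`):
`𝒜^{<1>} = 𝒜` and `𝒜^{<n+1>} = 𝒜^{<n>}𝒜`. -/
def rapow (mul : H →ₗ[ℂ] H →ₗ[ℂ] H) : ℕ → Submodule ℂ H
  | 0 => ⊤
  | 1 => ⊤
  | n + 2 => mulSub mul (rapow mul (n + 1)) ⊤

/-- The algebra is right nilpotent: `𝒜^{<n>} = 0` for some `n`. -/
def IsRightNilpotent (mul : H →ₗ[ℂ] H →ₗ[ℂ] H) : Prop := ∃ n : ℕ, 1 ≤ n ∧ rapow mul n = ⊥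

/-- The index of right nilpotency `n_r(𝒜) = min {n : 𝒜^{<n>} = 0}`. -/
def rNilIndex (mul : H →ₗ[ℂ] H →ₗ[ℂ] H) : ℕ := sInf {n : ℕ | 1 ≤ n ∧ rapow mul n = ⊥}

/-- Powers of a subset `I ⊆ 𝒜` (for `n ≥ 1`, with the junk value `I` at `n = 0`):
`I^{<1>} = I` and `I^{<n+1>}` is the set of finite sums `∑_j x_j · y_j` with
`x_j ∈ I^{<n>}` and `y_j ∈ I`. -/
def setPow (mul : H →ₗ[ℂ] H →ₗ[ℂ] H) (I : Set H) : ℕ → Set H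
  | 0 => I
  | 1 => I
  | n + 2 => {v : H | ∃ (m : ℕ) (x y : Fin m → H),
      (∀ j, x j ∈ setPow mul I (n + 1)) ∧ (∀ j, y j ∈ I) ∧
        v = ∑ j, mul (x j) (y j)}

end

/-! On a cycle `p 0 → ⋯ → p (n-1) → p 0` of minimal length there are no chords: an edge
`p a → p b` with `b ≢ a + 1 (mod n)` would close up a shorter cycle. Hence for
`v = ∑ e (p j)` the `p (i+1)`-coordinate of `w · v` is `w_{p i} · ω (p i) (p (i+1))`, and by
induction every coordinate of `v^m` along the cycle is nonzero. Since `v^m ∈ 𝒜^m`, the algebra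
is neither nil nor nilpotent. -/

namespace IsOrientedCycle

variable {ω : ℕ → ℕ → ℂ} {n : ℕ} {p : ℕ → ℕ}

theorem apply_mod_eq_apply_mod_iff (h : IsOrientedCycle ω n p) {a b : ℕ} :
    p (a % n) = p (b % n) ↔ a ≡ b [MOD n] := by
  refine ⟨fun hab => ?_, fun hab => by rw [hab]⟩
  have ha := Nat.mod_lt a h.1
  have hb := Nat.mod_lt b h.1
  rcases lt_trichotomy (a % n) (b % n) with hlt | heq | hlt
  · exact absurd hab (h.2.2.2 _ _ hlt hb)
  · exact heq
  · exact absurd hab.symm (h.2.2.2 _ _ hlt ha)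

theorem apply_mod_ne_zero (h : IsOrientedCycle ω n p) (m : ℕ) :
    ω (p (m % n)) (p ((m + 1) % n)) ≠ 0 := by
  have hedge := h.2.1 (m % n) (Nat.mod_lt m h.1)
  rw [← Nat.mod_add_mod]
  rcases Nat.lt_or_ge (m % n + 1) n with hlt | hge
  · rwa [Nat.mod_eq_of_lt hlt]
  · have hn : m % n + 1 = n := le_antisymm (Nat.mod_lt m h.1) hge
    rw [hn] at hedge
    rwa [hn, Nat.mod_self, ← h.2.2.1]

/-- Following the cycle from `p b` for `d` steps to `p a` and closing up along the edge
`p a → p b` gives an oriented cycle of length `d + 1`. -/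
theorem shortcut (h : IsOrientedCycle ω n p) {a b d : ℕ} (hd : d < n)
    (hbd : (b + d) % n = a % n) (hab : ω (p (a % n)) (p (b % n)) ≠ 0) :
    IsOrientedCycle ω (d + 1)
      (fun m => if m = d + 1 then p (b % n) else p ((b + m) % n)) := by
  refine ⟨d.succ_pos, fun m hm => ?_, by simp, fun a' b' hab' hb' => ?_⟩
  · rcases (Nat.lt_succ_iff.1 hm).lt_or_eq with hlt | rfl
    · simpa [hm.ne, hlt.ne, ← Nat.add_assoc] using h.apply_mod_ne_zero (b + m)
    · simpa [hbd] using hab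
  · simp only [show a' ≠ d + 1 by omega, hb'.ne, if_false]
    rw [Ne, h.apply_mod_eq_apply_mod_iff]
    intro hmod
    have := Nat.ModEq.add_left_cancel' b hmod
    rw [Nat.ModEq, Nat.mod_eq_of_lt (by omega), Nat.mod_eq_of_lt (by omega)] at this
    omega

/-- A cycle of minimal length has no chords. -/
theorem modEq_succ_of_ne_zero (h : IsOrientedCycle ω n p)
    (hmin : ∀ n' p', IsOrientedCycle ω n' p' → n ≤ n') {a b : ℕ}
    (hab : ω (p (a % n)) (p (b % n)) ≠ 0) : b ≡ a + 1 [MOD n] := by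
  have ha := Nat.mod_lt a h.1
  have hb := Nat.mod_lt b h.1
  obtain ⟨d, hd, hbd⟩ : ∃ d < n, (b + d) % n = a % n := by
    rcases le_or_gt (b % n) (a % n) with hle | hlt
    · refine ⟨a % n - b % n, by omega, ?_⟩
      rw [← Nat.mod_add_mod, Nat.add_sub_cancel' hle, Nat.mod_mod]
    · refine ⟨n + a % n - b % n, by omega, ?_⟩
      rw [← Nat.mod_add_mod, show b % n + (n + a % n - b % n) = a % n + n by omega,
        Nat.add_mod_right, Nat.mod_mod]
  have hdn : d + 1 = n := le_antisymm hd (hmin _ _ (h.shortcut hd hbd hab))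
  calc b % n = (b + d + 1) % n := by rw [Nat.add_assoc, hdn, Nat.add_mod_right]
    _ = (a + 1) % n := by rw [Nat.add_mod, hbd, ← Nat.add_mod]

end IsOrientedCycle

theorem HasOrientedCycle.exists_minimal {ω : ℕ → ℕ → ℂ} (h : HasOrientedCycle ω) :
    ∃ n p, IsOrientedCycle ω n p ∧ ∀ n' p', IsOrientedCycle ω n' p' → n ≤ n' := by
  classical
  obtain ⟨p, hp⟩ := Nat.find_spec h
  exact ⟨_, p, hp, fun n' p' h' => Nat.find_min' h ⟨p', h'⟩⟩

section EvolutionAlgebra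

variable {H : Type*} [NormedAddCommGroup H] [InnerProductSpace ℂ H] {mul : H →ₗ[ℂ] H →ₗ[ℂ] H}

theorem ppow_succ (v : H) {m : ℕ} (hm : 1 ≤ m) : ppow mul v (m + 1) = mul (ppow mul v m) v := by
  obtain ⟨k, rfl⟩ := Nat.exists_eq_add_of_le' hm
  rfl

theorem apow_one : apow mul 1 = ⊤ := by
  rw [apow, Nat.strongRecOn_eq]

theorem apow_add_two (m : ℕ) :
    apow mul (m + 2) = ⨆ (i : ℕ) (_ : 1 ≤ i) (_ : i ≤ m + 1),
      mulSub mul (apow mul i) (apow mul (m + 2 - i)) := by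
  rw [apow, Nat.strongRecOn_eq]
  rfl

theorem mul_mem_apow_add {x y : H} {i j : ℕ} (hi : 1 ≤ i) (hj : 1 ≤ j)
    (hx : x ∈ apow mul i) (hy : y ∈ apow mul j) : mul x y ∈ apow mul (i + j) := by
  obtain ⟨m, hm⟩ : ∃ m, i + j = m + 2 := ⟨i + j - 2, by omega⟩
  have hle : mulSub mul (apow mul i) (apow mul j) ≤ apow mul (i + j) := by
    rw [hm, apow_add_two, show j = m + 2 - i by omega]
    exact le_iSup₂_of_le i hi (le_iSup_of_le (by omega) le_rfl)
  exact hle (Submodule.subset_span ⟨x, hx, y, hy, rfl⟩)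

theorem ppow_mem_apow (v : H) {m : ℕ} (hm : 1 ≤ m) : ppow mul v m ∈ apow mul m := by
  induction m, hm using Nat.le_induction with
  | base => exact apow_one (mul := mul) ▸ Submodule.mem_top
  | succ m hm ih =>
    rw [ppow_succ v hm]
    exact mul_mem_apow_add hm le_rfl ih (apow_one (mul := mul) ▸ Submodule.mem_top)

theorem not_isNilpotent'_of_ppow_ne_zero {v : H} (hv : ∀ m, 1 ≤ m → ppow mul v m ≠ 0) :
    ¬ IsNilpotent' mul := by
  rintro ⟨m, hm, hbot⟩
  have hmem := ppow_mem_apow (mul := mul) v hm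
  rw [hbot, Submodule.mem_bot] at hmem
  exact hv m hm hmem

variable {ι : Type*} {e : HilbertBasis ι ℂ H}

theorem mul_basis_eq_smul (hcont : ∀ x : H, Continuous fun y => mul x y)
    (hnat : ∀ i j, i ≠ j → mul (e i) (e j) = 0) (w : H) (j : ι) :
    mul (e j) w = e.repr w j • mul (e j) (e j) := by
  have hsum := (e.hasSum_repr w).map (mul (e j)) (hcont (e j))
  refine hsum.unique ?_
  convert hasSum_single j fun i hi => ?_ using 1
  · simp
  · simp [hnat j i hi.symm]

end EvolutionAlgebra

section CycleSum

open Finset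

variable {H : Type*} [NormedAddCommGroup H] [InnerProductSpace ℂ H] {mul : H →ₗ[ℂ] H →ₗ[ℂ] H}
  {e : HilbertBasis ℕ ℂ H}

theorem repr_mul_sum_basis (hcomm : ∀ x y : H, mul x y = mul y x)
    (hcont : ∀ x : H, Continuous fun y => mul x y)
    (hnat : ∀ i j : ℕ, i ≠ j → mul (e i) (e j) = 0)
    (w : H) (s : Finset ℕ) (f : ℕ → ℕ) (k : ℕ) :
    e.repr (mul w (∑ j ∈ s, e (f j))) k = ∑ j ∈ s, e.repr w (f j) * structConst mul e (f j) k := by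
  rw [e.repr_apply_apply, map_sum, inner_sum]
  refine sum_congr rfl fun j _ => ?_
  rw [hcomm, mul_basis_eq_smul hcont hnat, inner_smul_right, structConst,
    e.repr_apply_apply, e.repr_apply_apply]

theorem repr_ppow_sum_cycle_ne_zero (hcomm : ∀ x y : H, mul x y = mul y x)
    (hcont : ∀ x : H, Continuous fun y => mul x y)
    (hnat : ∀ i j : ℕ, i ≠ j → mul (e i) (e j) = 0)
    {n : ℕ} {p : ℕ → ℕ} (h : IsOrientedCycle (structConst mul e) n p)
    (hmin : ∀ n' p', IsOrientedCycle (structConst mul e) n' p' → n ≤ n')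
    {m : ℕ} (hm : 1 ≤ m) (i : ℕ) :
    e.repr (ppow mul (∑ j ∈ range n, e (p j)) m) (p (i % n)) ≠ 0 := by
  have hv : ∑ j ∈ range n, e (p j) = ∑ j ∈ range n, e (p (j % n)) :=
    sum_congr rfl fun j hj => by rw [Nat.mod_eq_of_lt (mem_range.1 hj)]
  rw [hv]
  induction m, hm using Nat.le_induction generalizing i with
  | base =>
    have hone := orthonormal_iff_ite.1 e.orthonormal
    rw [ppow, e.repr_apply_apply, inner_sum, sum_eq_single (i % n), Nat.mod_mod, hone, if_pos rfl]
    · exact one_ne_zero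
    · intro l hl hli
      have hne : p (i % n) ≠ p (l % n) := by
        rw [Ne, h.apply_mod_eq_apply_mod_iff]
        exact fun hmod => hli (by rw [← Nat.mod_eq_of_lt (mem_range.1 hl)]; exact hmod.symm)
      rw [hone, if_neg hne]
    · exact fun hi => absurd (mem_range.2 (Nat.mod_lt i h.1)) hi
  | succ m hm ih =>
    obtain ⟨j, hj⟩ : ∃ j, (j + 1) % n = i % n := ⟨i + n - 1, by
      rw [show i + n - 1 + 1 = i + n by have := h.1; omega, Nat.add_mod_right]⟩
    rw [← hj, ppow_succ _ hm, repr_mul_sum_basis hcomm hcont hnat,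
      sum_eq_single (j % n) ?_ (fun hj' => absurd (mem_range.2 (Nat.mod_lt j h.1)) hj'),
      Nat.mod_mod]
    · exact mul_ne_zero (ih j) (h.apply_mod_ne_zero j)
    · intro l hl hlj
      refine mul_eq_zero_of_right _ ?_
      by_contra hedge
      have hmod := Nat.ModEq.add_right_cancel' 1 (h.modEq_succ_of_ne_zero hmin hedge)
      exact hlj (by rw [hmod, Nat.mod_eq_of_lt (mem_range.1 hl)])

end CycleSum

noncomputable section

variable {H : Type*} [NormedAddCommGroup H] [InnerProductSpace ℂ H] [CompleteSpace H]

/-- Let `𝒜` be a complex separable Hilbert evolution algebra with natural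
orthonormal basis `𝓑 = {e i}`. If `G(𝒜,𝓑)` contains an oriented cycle, then `𝒜` is
neither nil nor nilpotent; moreover, for any oriented cycle `p 0, …, p n (= p 0)` of
minimal length, the element `v = e (p 0) + ⋯ + e (p (n-1))` satisfies `v^m ≠ 0` for every
`m ≥ 1`. -/
theorem stmt_16
    (mul : H →ₗ[ℂ] H →ₗ[ℂ] H)
    (hcomm : ∀ x y : H, mul x y = mul y x)
    (hcont : ∀ x : H, Continuous fun y => mul x y)
    (e : HilbertBasis ℕ ℂ H)
    (hnat : ∀ i j : ℕ, i ≠ j → mul (e i) (e j) = 0)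
    (ω : ℕ → ℕ → ℂ)
    (hω : ∀ i k : ℕ, ω i k = structConst mul e i k)
    (hc : HasOrientedCycle ω) :
    ¬ IsNil mul ∧ ¬ IsNilpotent' mul ∧
      ∀ (n : ℕ) (p : ℕ → ℕ), IsOrientedCycle ω n p →
        (∀ (n' : ℕ) (p' : ℕ → ℕ), IsOrientedCycle ω n' p' → n ≤ n') →
        ∀ m : ℕ, 1 ≤ m → ppow mul (∑ j ∈ Finset.range n, e (p j)) m ≠ 0 := by
  obtain rfl : ω = structConst mul e := funext₂ hω
  have hpow : ∀ (n : ℕ) (p : ℕ → ℕ), IsOrientedCycle (structConst mul e) n p →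
      (∀ n' p', IsOrientedCycle (structConst mul e) n' p' → n ≤ n') →
      ∀ m : ℕ, 1 ≤ m → ppow mul (∑ j ∈ Finset.range n, e (p j)) m ≠ 0 :=
    fun n p h hmin m hm h0 => repr_ppow_sum_cycle_ne_zero hcomm hcont hnat h hmin hm 0
      (by rw [h0, map_zero]; rfl)
  obtain ⟨n, p, h, hmin⟩ := hc.exists_minimal
  refine ⟨fun hnil => ?_, not_isNilpotent'_of_ppow_ne_zero (hpow n p h hmin), hpow⟩
  obtain ⟨m, hm, h0⟩ := hnil (∑ j ∈ Finset.range n, e (p j))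
  exact hpow n p h hmin m hm h0

end
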